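/- Let φ be a resource-monotonic allocation rule that agrees with some draft rule φ^f at a problem (≿, X), and let x ∉ X be an object such that y ≻_i x for every agent i and every y ∈ φ_i(≿, X). Then φ_i(≿, X) ⊆ φ_i(≿, X ∪ {x}) for every agent i. -/

import Mathlib

open Finset

noncomputable section

abbrev Obj := ℕ

def PD (r : Obj → Obj → Prop) (S T : Finset Obj) : Prop :=
  ∃ μ : {x // x ∈ T} → {x // x ∈ S}, Function.Injective μ ∧ ∀ x, r (μ x).1 x.1

def StrictPD (r : Obj → Obj → Prop) (S T : Finset Obj) : Prop :=
  PD r S T ∧ ¬ PD r T S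

def LinProfile {n : ℕ} (pref : Fin n → Obj → Obj → Prop) : Prop :=
  ∀ i, IsLinearOrder Obj (pref i)

def IsAlloc {n : ℕ} (A : Fin n → Finset Obj) (X : Finset Obj) : Prop :=
  (∀ i, A i ⊆ X) ∧ ∀ i j, i ≠ j → Disjoint (A i) (A j)

open Classical in
def topOf (r : Obj → Obj → Prop) (X : Finset Obj) : Obj :=
  if h : ∃ m ∈ X, ∀ x ∈ X, r m x then h.choose else 0

def remaining {n : ℕ} (pref : Fin n → Obj → Obj → Prop) (f : ℕ → Fin n)
    (X : Finset Obj) : ℕ → Finset Obj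
  | 0 => X
  | k + 1 => (remaining pref f X k).erase (topOf (pref (f k)) (remaining pref f X k))

def draft {n : ℕ} (pref : Fin n → Obj → Obj → Prop) (f : ℕ → Fin n)
    (X : Finset Obj) (i : Fin n) : Finset Obj :=
  ((Finset.range X.card).filter (fun k => f k = i)).image
    (fun k => topOf (pref (f k)) (remaining pref f X k))

def roundRobin {n : ℕ} (hn : 0 < n) (π : Equiv.Perm (Fin n)) (k : ℕ) : Fin n :=
  π.symm ⟨k % n, Nat.mod_lt k hn⟩

def draftPi {n : ℕ} (hn : 0 < n) (pref : Fin n → Obj → Obj → Prop)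
    (π : Equiv.Perm (Fin n)) (X : Finset Obj) (i : Fin n) : Finset Obj :=
  draft pref (roundRobin hn π) X i

/-!
Let `a₀, a₁, …` be the objects picked by the draft at `X` and `B` the allocation at
`X ∪ {x}`. By strong induction on `k`, the `k`-th pick `aₖ` lies in the bundle of the agent
`i` who picked it. Otherwise every object of `Bᵢ` weakly preferred to `aₖ` is neither `x`
(which is worse than `aₖ`) nor still available at step `k`, so it is an earlier pick, which by
induction sits with its picker, i.e. an earlier pick of `i`. Hence `Bᵢ` has fewer objects
`≿ᵢ aₖ` than the draft bundle of `i`, which contains those earlier picks and `aₖ` itself;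
but the injection given by resource monotonicity carries the latter into the former.
-/

section

open Classical

theorem exists_forall_rel_of_nonempty (r : Obj → Obj → Prop) [IsLinearOrder Obj r]
    {X : Finset Obj} (hX : X.Nonempty) : ∃ m ∈ X, ∀ y ∈ X, r m y := by
  induction hX using Finset.Nonempty.cons_induction with
  | singleton a => exact ⟨a, mem_singleton_self a, by simp [refl_of r a]⟩
  | cons a s _ _ ih =>
    obtain ⟨m, hm, hmin⟩ := ih
    rcases total_of r m a with hma | ham
    · exact ⟨m, mem_cons_of_mem hm, (forall_mem_cons _ _).mpr ⟨hma, hmin⟩⟩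
    · exact ⟨a, mem_cons_self a s,
        (forall_mem_cons _ _).mpr ⟨refl_of r a, fun y hy => trans_of r ham (hmin y hy)⟩⟩

theorem topOf_mem_and_rel {r : Obj → Obj → Prop} [hr : IsLinearOrder Obj r]
    {X : Finset Obj} (hX : X.Nonempty) :
    topOf r X ∈ X ∧ ∀ y ∈ X, r (topOf r X) y := by
  have hex := exists_forall_rel_of_nonempty r hX
  rw [topOf, dif_pos hex]
  exact hex.choose_spec

theorem PD.card_filter_le {r : Obj → Obj → Prop} [IsTrans Obj r] {S T : Finset Obj}
    (h : PD r S T) (a : Obj) : (T.filter (r · a)).card ≤ (S.filter (r · a)).card := by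
  obtain ⟨μ, hμ, hdom⟩ := h
  refine card_le_card_of_injOn (fun z => if hz : z ∈ T then (μ ⟨z, hz⟩).1 else z) ?_ ?_
  · intro z hz
    obtain ⟨hzT, hza⟩ := mem_filter.mp hz
    simp only [dif_pos hzT]
    exact mem_filter.mpr ⟨(μ ⟨z, hzT⟩).2, trans_of r (hdom ⟨z, hzT⟩) hza⟩
  · intro z hz w hw hzw
    have hzT := (mem_filter.mp hz).1
    have hwT := (mem_filter.mp hw).1
    simp only [dif_pos hzT, dif_pos hwT] at hzw
    exact congrArg Subtype.val (hμ (Subtype.ext hzw))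

variable {n : ℕ} {pref : Fin n → Obj → Obj → Prop} {f : ℕ → Fin n} {X : Finset Obj}

variable (pref f X) in
def pick (k : ℕ) : Obj :=
  topOf (pref (f k)) (remaining pref f X k)

theorem remaining_succ (k : ℕ) :
    remaining pref f X (k + 1) = (remaining pref f X k).erase (pick pref f X k) :=
  rfl

theorem remaining_antitone : Antitone (remaining pref f X) :=
  antitone_nat_of_succ_le fun k => by
    rw [remaining_succ]
    exact erase_subset _ _

theorem pick_mem_and_rel (hpref : LinProfile pref) {k : ℕ}
    (hne : (remaining pref f X k).Nonempty) :
    pick pref f X k ∈ remaining pref f X k ∧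
      ∀ y ∈ remaining pref f X k, pref (f k) (pick pref f X k) y :=
  topOf_mem_and_rel (hr := hpref (f k)) hne

theorem mem_draft {i : Fin n} {y : Obj} :
    y ∈ draft pref f X i ↔ ∃ k < X.card, f k = i ∧ pick pref f X k = y := by
  simp [draft, pick, and_assoc]

theorem card_remaining (hpref : LinProfile pref) {k : ℕ} (hk : k ≤ X.card) :
    (remaining pref f X k).card = X.card - k := by
  induction k with
  | zero => rfl
  | succ k ih =>
    have hcard := ih (by omega)
    have hne : (remaining pref f X k).Nonempty := by
      rw [← card_pos, hcard]
      omega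
    rw [remaining_succ, card_erase_of_mem (pick_mem_and_rel hpref hne).1, hcard]
    omega

theorem remaining_nonempty (hpref : LinProfile pref) {k : ℕ} (hk : k < X.card) :
    (remaining pref f X k).Nonempty := by
  rw [← card_pos, card_remaining hpref hk.le]
  omega

theorem pick_mem_remaining (hpref : LinProfile pref) {k : ℕ} (hk : k < X.card) :
    pick pref f X k ∈ remaining pref f X k :=
  (pick_mem_and_rel hpref (remaining_nonempty hpref hk)).1

theorem pick_rel_of_mem_remaining (hpref : LinProfile pref) {k : ℕ} (hk : k < X.card)
    {y : Obj} (hy : y ∈ remaining pref f X k) : pref (f k) (pick pref f X k) y :=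
  (pick_mem_and_rel hpref (remaining_nonempty hpref hk)).2 y hy

theorem pick_notMem_remaining_of_lt {j k : ℕ} (hjk : j < k) :
    pick pref f X j ∉ remaining pref f X k := fun h =>
  notMem_erase _ _ (remaining_antitone hjk h)

theorem pick_ne_of_lt (hpref : LinProfile pref) {j k : ℕ} (hjk : j < k) (hk : k < X.card) :
    pick pref f X j ≠ pick pref f X k := fun h =>
  pick_notMem_remaining_of_lt hjk (h ▸ pick_mem_remaining hpref hk)

theorem exists_pick_eq_of_notMem_remaining {y : Obj} (hy : y ∈ X) {k : ℕ}
    (hyk : y ∉ remaining pref f X k) : ∃ j < k, pick pref f X j = y := by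
  induction k with
  | zero => exact absurd hy hyk
  | succ k ih =>
    by_cases hmem : y ∈ remaining pref f X k
    · refine ⟨k, k.lt_succ_self, ?_⟩
      by_contra hne
      exact hyk (mem_erase.mpr ⟨Ne.symm hne, hmem⟩)
    · obtain ⟨j, hj, rfl⟩ := ih hmem
      exact ⟨j, hj.trans k.lt_succ_self, rfl⟩

variable (pref f X) in
def earlierPicks (k : ℕ) : Finset Obj :=
  ((range k).filter (fun j => f j = f k)).image (pick pref f X)

theorem pick_notMem_earlierPicks (hpref : LinProfile pref) {k : ℕ} (hk : k < X.card) :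
    pick pref f X k ∉ earlierPicks pref f X k := by
  simp only [earlierPicks, mem_image, mem_filter, mem_range]
  rintro ⟨j, ⟨hjk, -⟩, hj⟩
  exact pick_ne_of_lt hpref hjk hk hj

theorem insert_pick_subset_filter_draft (hpref : LinProfile pref) {k : ℕ} (hk : k < X.card) :
    insert (pick pref f X k) (earlierPicks pref f X k) ⊆
      (draft pref f X (f k)).filter (pref (f k) · (pick pref f X k)) := by
  have := hpref (f k)
  intro z hz
  rcases mem_insert.mp hz with rfl | hz
  · exact mem_filter.mpr ⟨mem_draft.mpr ⟨k, hk, rfl, rfl⟩, refl_of (pref (f k)) _⟩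
  · obtain ⟨j, hj, rfl⟩ := mem_image.mp hz
    obtain ⟨hjk, hfj⟩ := mem_filter.mp hj
    have hjk : j < k := mem_range.mp hjk
    refine mem_filter.mpr ⟨mem_draft.mpr ⟨j, hjk.trans hk, hfj, rfl⟩, ?_⟩
    rw [← hfj]
    exact pick_rel_of_mem_remaining hpref (hjk.trans hk)
      (remaining_antitone hjk.le (pick_mem_remaining hpref hk))

theorem filter_rel_pick_subset_earlierPicks (hpref : LinProfile pref) {k : ℕ}
    (hk : k < X.card) {B : Fin n → Finset Obj} {x : Obj} (hB : IsAlloc B (insert x X))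
    (hx : ¬ pref (f k) x (pick pref f X k)) (hkB : pick pref f X k ∉ B (f k))
    (hprev : ∀ j < k, pick pref f X j ∈ B (f j)) :
    (B (f k)).filter (pref (f k) · (pick pref f X k)) ⊆ earlierPicks pref f X k := by
  have := hpref (f k)
  intro z hz
  obtain ⟨hzB, hzk⟩ := mem_filter.mp hz
  have hzX : z ∈ X := by
    rcases mem_insert.mp (hB.1 _ hzB) with rfl | hzX
    · exact absurd hzk hx
    · exact hzX
  have hzrem : z ∉ remaining pref f X k := fun hzrem =>
    hkB (antisymm hzk (pick_rel_of_mem_remaining hpref hk hzrem) ▸ hzB)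
  obtain ⟨j, hjk, rfl⟩ := exists_pick_eq_of_notMem_remaining hzX hzrem
  have hfj : f j = f k := by
    by_contra hne
    exact disjoint_left.mp (hB.2 _ _ hne) (hprev j hjk) hzB
  exact mem_image.mpr ⟨j, mem_filter.mpr ⟨mem_range.mpr hjk, hfj⟩, rfl⟩

theorem pick_mem_of_forall_PD (hpref : LinProfile pref) {B : Fin n → Finset Obj} {x : Obj}
    (hB : IsAlloc B (insert x X)) (hPD : ∀ i, PD (pref i) (B i) (draft pref f X i))
    (hworse : ∀ i, ∀ y ∈ draft pref f X i, pref i y x ∧ y ≠ x) :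
    ∀ k < X.card, pick pref f X k ∈ B (f k) := by
  intro k
  induction k using Nat.strong_induction_on with
  | _ k ih =>
  intro hk
  have := hpref (f k)
  have hx : ¬ pref (f k) x (pick pref f X k) := fun hxk =>
    have hworse_k := hworse (f k) _ (mem_draft.mpr ⟨k, hk, rfl, rfl⟩)
    hworse_k.2 (antisymm hworse_k.1 hxk)
  by_contra hkB
  have hcount := calc
    (earlierPicks pref f X k).card + 1
        = (insert (pick pref f X k) (earlierPicks pref f X k)).card :=
          (card_insert_of_notMem (pick_notMem_earlierPicks hpref hk)).symm
    _ ≤ ((draft pref f X (f k)).filter (pref (f k) · (pick pref f X k))).card :=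
          card_le_card (insert_pick_subset_filter_draft hpref hk)
    _ ≤ ((B (f k)).filter (pref (f k) · (pick pref f X k))).card :=
          (hPD (f k)).card_filter_le _
    _ ≤ (earlierPicks pref f X k).card :=
          card_le_card (filter_rel_pick_subset_earlierPicks hpref hk hB hx hkB
            fun j hjk => ih j hjk (hjk.trans hk))
  omega

end

theorem rm_lemma_general {n : ℕ}
    (φ : (Fin n → Obj → Obj → Prop) → Finset Obj → Fin n → Finset Obj)
    (hvalid : ∀ pref, LinProfile pref → ∀ X : Finset Obj, X.Nonempty →
      IsAlloc (φ pref X) X)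
    (hRM : ∀ pref, LinProfile pref → ∀ X X' : Finset Obj, X'.Nonempty → X' ⊆ X →
      ∀ i, PD (pref i) (φ pref X i) (φ pref X' i))
    (pref : Fin n → Obj → Obj → Prop) (hpref : LinProfile pref)
    (X : Finset Obj) (hX : X.Nonempty)
    (f : ℕ → Fin n) (hagree : φ pref X = draft pref f X)
    (x : Obj)
    (hworse : ∀ i, ∀ y ∈ φ pref X i, pref i y x ∧ y ≠ x) :
    ∀ i, φ pref X i ⊆ φ pref (insert x X) i := by
  have hB := hvalid pref hpref (insert x X) (insert_nonempty x X)
  have hPD := hRM pref hpref (insert x X) X hX (subset_insert x X)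
  rw [hagree] at hPD hworse ⊢
  intro i y hy
  obtain ⟨k, hk, rfl, rfl⟩ := mem_draft.mp hy
  exact pick_mem_of_forall_PD hpref hB hPD hworse k hk

theorem rm_lemma {n : ℕ}
    (φ : (Fin n → Obj → Obj → Prop) → Finset Obj → Fin n → Finset Obj)
    (hvalid : ∀ pref, LinProfile pref → ∀ X : Finset Obj, X.Nonempty →
      IsAlloc (φ pref X) X)
    (hRM : ∀ pref, LinProfile pref → ∀ X X' : Finset Obj, X'.Nonempty → X' ⊆ X →
      ∀ i, PD (pref i) (φ pref X i) (φ pref X' i))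
    (pref : Fin n → Obj → Obj → Prop) (hpref : LinProfile pref)
    (X : Finset Obj) (hX : X.Nonempty)
    (f : ℕ → Fin n) (hagree : φ pref X = draft pref f X)
    (x : Obj) (hx : x ∉ X)
    (hworse : ∀ i, ∀ y ∈ φ pref X i, pref i y x ∧ y ≠ x) :
    ∀ i, φ pref X i ⊆ φ pref (insert x X) i :=
  rm_lemma_general φ hvalid hRM pref hpref X hX f hagree x hworse
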